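/- Let k be a field of characteristic zero and let (𝒜, {m_n}) be a minimal A∞-category over k with finitely many objects and finite-dimensional graded Hom-spaces. Suppose F_1,…,F_r are objects of 𝒜 such that: (1) Hom^n(F_i,F_j) = 0 for all n < 0, Hom^0(F_i,F_i) is one-dimensional (spanned by the identity) for each i, and Hom^0(F_i,F_j) = 0 for i ≠ j; (2) the full A∞-subcategory 𝒜′ of 𝒜 on the objects F_1,…,F_r is strictly unital; (3) 𝒜′ carries a cyclic pairing of dimension two, i.e. nondegenerate degree-zero graded-symmetric pairings ⟨-,-⟩ : Hom(F_i,F_j)[1] ⊗ Hom(F_j,F_i)[1] → k satisfying the cyclic-invariance identity for all operations b_n. Then {F_1,…,F_r} is a Σ-collection, and 𝒜′ is formal; more precisely, the higher operations of 𝒜′ vanish identically: m_n = 0 on 𝒜′ for all n ≥ 3. -/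

import Mathlib

namespace AInfty

/-- The data of an A∞-category with object type `Obj` over the field `k`, encoded on the
total morphism space `H = ⊕_{i,j,p} Hom^p(i,j)`.  `grade i j p` is the space of degree-`p`
morphisms from `i` to `j`, and `op n` is the `n`-ary A∞-operation (the operation `m_n` /
`b_n`, written in the shifted (bar) sign conventions), applied to chains
`(a 0, …, a (n-1))` of composable morphisms, with `a 0` the first morphism of the chain. -/
structure Struct (k : Type) [Field k] (Obj H : Type) [AddCommGroup H] [Module k H] where
  grade : Obj → Obj → ℤ → Submodule k H
  op : ∀ n : ℕ, MultilinearMap k (fun _ : Fin n => H) H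

variable {k : Type} [Field k] {Obj H : Type} [AddCommGroup H] [Module k H]

/-- Homogeneous elements of degree `p`. -/
def homog (A : Struct k Obj H) (p : ℤ) : Submodule k H :=
  ⨆ (i : Obj) (j : Obj), A.grade i j p

/-- Composability of a chain of morphisms with the given sources and targets. -/
def Composable (n : ℕ) (src tgt : Fin n → Obj) : Prop :=
  ∀ (l : ℕ) (h : l + 1 < n), tgt ⟨l, by omega⟩ = src ⟨l + 1, h⟩

/-- Insert the inner operation `op s` applied to the arguments `a t, …, a (t+s-1)`
into the chain `a`, producing a chain of length `n + 1 - s`. -/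
def insertArg (A : Struct k Obj H) (n t s : ℕ) (a : Fin n → H) :
    Fin (n + 1 - s) → H := fun j =>
  if j.val < t then (if h : j.val < n then a ⟨j.val, h⟩ else 0)
  else if j.val = t then
    A.op s (fun i : Fin s => if h : t + i.val < n then a ⟨t + i.val, h⟩ else 0)
  else (if h : j.val + s - 1 < n then a ⟨j.val + s - 1, h⟩ else 0)

/-- The Koszul sign `(-1)^(Σ_{l < t} (deg l - 1))` arising when an inner operation
(of shifted degree one) passes the first `t` arguments of the chain. -/
def koszulSign (k : Type) [Field k] {n : ℕ} (deg : Fin n → ℤ) (t : ℕ) : k :=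
  (-1 : k) ^ (∑ l ∈ Finset.univ.filter (fun l : Fin n => l.val < t), (deg l - 1))

/-- The decompositions `n = r + s + t` (recorded as the pairs `(t, s)`, with `s ≥ 1`)
indexing the terms of the A∞-relations. -/
def decomps (n : ℕ) : Finset (ℕ × ℕ) :=
  (Finset.range (n + 1) ×ˢ Finset.range (n + 1)).filter fun p => 1 ≤ p.2 ∧ p.1 + p.2 ≤ n

/-- The A∞-relations `Σ_{r+s+t=n} ± m_{r+1+t}(1^{⊗r} ⊗ m_s ⊗ 1^{⊗t}) = 0`, stated on
homogeneous elements (to which the general case reduces by multilinearity). -/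
def AssocRel (A : Struct k Obj H) : Prop :=
  ∀ (n : ℕ), 1 ≤ n → ∀ (deg : Fin n → ℤ) (a : Fin n → H),
    (∀ l, a l ∈ homog A (deg l)) →
    ∑ p ∈ decomps n,
      koszulSign k deg p.1 • A.op (n + 1 - p.2) (insertArg A n p.1 p.2 a) = 0

open scoped Classical in
/-- `H` is the direct sum of the graded pieces `Hom^p(i,j)`. -/
def Internal (A : Struct k Obj H) : Prop :=
  DirectSum.IsInternal fun x : Obj × Obj × ℤ => A.grade x.1 x.2.1 x.2.2

/-- `A` is an A∞-category: the total space is graded by triples (source, target, degree),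
the operations respect the grading (the operation `m_n` has degree `2 - n`), vanish on
non-composable chains, `m_0 = 0`, and the A∞-relations hold. -/
structure IsAInftyCat (A : Struct k Obj H) : Prop where
  internal : Internal A
  op_zero : A.op 0 = 0
  op_grade : ∀ (n : ℕ) (hn : 1 ≤ n) (src tgt : Fin n → Obj) (deg : Fin n → ℤ)
      (a : Fin n → H), (∀ l, a l ∈ A.grade (src l) (tgt l) (deg l)) →
      Composable n src tgt →
      A.op n a ∈
        A.grade (src ⟨0, by omega⟩) (tgt ⟨n - 1, by omega⟩) ((∑ l, deg l) + 2 - (n : ℤ))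
  op_noncomp : ∀ (n : ℕ), 1 ≤ n → ∀ (src tgt : Fin n → Obj) (deg : Fin n → ℤ)
      (a : Fin n → H), (∀ l, a l ∈ A.grade (src l) (tgt l) (deg l)) →
      ¬ Composable n src tgt → A.op n a = 0
  assoc : AssocRel A

/-- Strict units `1_i` for `A` (each spanning part of `Hom^0(i,i)`): they are closed,
units for the binary composition, and kill all the higher operations. -/
structure IsStrictUnit (A : Struct k Obj H) (one : Obj → H) : Prop where
  mem : ∀ i, one i ∈ A.grade i i 0
  ne_zero : ∀ i, one i ≠ 0
  op_one : ∀ i, A.op 1 (fun _ => one i) = 0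
  left_unit : ∀ (i j : Obj) (p : ℤ) (a : H), a ∈ A.grade i j p → A.op 2 ![one i, a] = a
  right_unit : ∀ (i j : Obj) (p : ℤ) (a : H), a ∈ A.grade i j p → A.op 2 ![a, one j] = a
  higher : ∀ (n : ℕ), 3 ≤ n → ∀ (a : Fin n → H) (l : Fin n) (i : Obj),
    a l = one i → A.op n a = 0

/-- Units for the binary composition `m_2` only.  For a minimal A∞-category this is
weak unitality: the cohomology category has identity morphisms. -/
structure HasBinaryUnits (A : Struct k Obj H) (one : Obj → H) : Prop where
  mem : ∀ i, one i ∈ A.grade i i 0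
  ne_zero : ∀ i, one i ≠ 0
  left_unit : ∀ (i j : Obj) (p : ℤ) (a : H), a ∈ A.grade i j p → A.op 2 ![one i, a] = a
  right_unit : ∀ (i j : Obj) (p : ℤ) (a : H), a ∈ A.grade i j p → A.op 2 ![a, one j] = a

/-- A cyclic pairing of dimension `d` on `A`: a pairing of `Hom^p(i,j)` with
`Hom^{d-p}(j,i)`, nondegenerate, graded symmetric (with the suspension sign conventions
taken into account, so that on unshifted degrees the sign is `(-1)^(p*q)`), and
cyclically invariant with respect to all the operations, with the Koszul sign computed
from the shifted degrees `deg - 1` as in the paper. -/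
structure IsCyclicPairing (A : Struct k Obj H) (ε : H →ₗ[k] H →ₗ[k] k) (d : ℤ) : Prop where
  orth : ∀ (i j i' j' : Obj) (p q : ℤ) (a b : H), a ∈ A.grade i j p → b ∈ A.grade i' j' q →
    ε a b ≠ 0 → i' = j ∧ j' = i ∧ q = d - p
  symm : ∀ (p q : ℤ) (a b : H), a ∈ homog A p → b ∈ homog A q →
    ε a b = (-1 : k) ^ (p * q) * ε b a
  nondeg : ∀ (i j : Obj) (p : ℤ) (a : H), a ∈ A.grade i j p →
    (∀ b ∈ A.grade j i (d - p), ε a b = 0) → a = 0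
  cyclic : ∀ (n : ℕ), 1 ≤ n → ∀ (deg : Fin (n + 1) → ℤ) (a : Fin (n + 1) → H),
    (∀ l, a l ∈ homog A (deg l)) →
    ε (A.op n fun l : Fin n => a l.castSucc) (a (Fin.last n)) =
      (-1 : k) ^ ((deg 0 - 1) * ∑ l : Fin n, (deg l.succ - 1)) *
        ε (A.op n fun l : Fin n => a l.succ) (a 0)

/-- `i` is a Σ-object: `Hom^0` and `Hom^2` are one-dimensional, `Hom^1` is
`2g`-dimensional for some `g ∈ ℤ_{≥0}`, and all other graded pieces vanish. -/
def IsSigmaObject (A : Struct k Obj H) (i : Obj) : Prop :=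
  Module.finrank k (A.grade i i 0) = 1 ∧
  (∃ g : ℕ, Module.finrank k (A.grade i i 1) = 2 * g) ∧
  Module.finrank k (A.grade i i 2) = 1 ∧
  ∀ p : ℤ, p ≠ 0 → p ≠ 1 → p ≠ 2 → A.grade i i p = ⊥

/-- A Σ-collection: each object is a Σ-object and there are no degree-zero morphisms
between distinct members. -/
def IsSigmaCollection (A : Struct k Obj H) {r : ℕ} (F : Fin r → Obj) : Prop :=
  (∀ i, IsSigmaObject A (F i)) ∧ ∀ i j : Fin r, i ≠ j → A.grade (F i) (F j) 0 = ⊥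

/-- The total morphism space of the full subcategory on the objects `F`. -/
def subHom (A : Struct k Obj H) {r : ℕ} (F : Fin r → Obj) : Submodule k H :=
  ⨆ (i : Fin r) (j : Fin r) (p : ℤ), A.grade (F i) (F j) p

/-- The degree-`p` part of the full subcategory on `F`. -/
def subHomog (A : Struct k Obj H) {r : ℕ} (F : Fin r → Obj) (p : ℤ) : Submodule k H :=
  ⨆ (i : Fin r) (j : Fin r), A.grade (F i) (F j) p

/-- Strict unitality of the full subcategory of `A` on the objects `F`. -/
structure IsStrictUnitOn (A : Struct k Obj H) {r : ℕ} (F : Fin r → Obj)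
    (one : Fin r → H) : Prop where
  mem : ∀ i, one i ∈ A.grade (F i) (F i) 0
  ne_zero : ∀ i, one i ≠ 0
  op_one : ∀ i, A.op 1 (fun _ => one i) = 0
  left_unit : ∀ (i j : Fin r) (p : ℤ) (a : H), a ∈ A.grade (F i) (F j) p →
    A.op 2 ![one i, a] = a
  right_unit : ∀ (i j : Fin r) (p : ℤ) (a : H), a ∈ A.grade (F i) (F j) p →
    A.op 2 ![a, one j] = a
  higher : ∀ (n : ℕ), 3 ≤ n → ∀ (a : Fin n → H), (∀ l, a l ∈ subHom A F) →
    ∀ (l : Fin n) (i : Fin r), a l = one i → A.op n a = 0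

/-- A cyclic pairing of dimension `d` on the full subcategory of `A` on the objects `F`. -/
structure IsCyclicPairingOn (A : Struct k Obj H) {r : ℕ} (F : Fin r → Obj)
    (ε : H →ₗ[k] H →ₗ[k] k) (d : ℤ) : Prop where
  orth : ∀ (i j i' j' : Fin r) (p q : ℤ) (a b : H),
    a ∈ A.grade (F i) (F j) p → b ∈ A.grade (F i') (F j') q →
    ε a b ≠ 0 → F i' = F j ∧ F j' = F i ∧ q = d - p
  symm : ∀ (p q : ℤ) (a b : H), a ∈ subHomog A F p → b ∈ subHomog A F q →
    ε a b = (-1 : k) ^ (p * q) * ε b a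
  nondeg : ∀ (i j : Fin r) (p : ℤ) (a : H), a ∈ A.grade (F i) (F j) p →
    (∀ b ∈ A.grade (F j) (F i) (d - p), ε a b = 0) → a = 0
  cyclic : ∀ (n : ℕ), 1 ≤ n → ∀ (deg : Fin (n + 1) → ℤ) (a : Fin (n + 1) → H),
    (∀ l, a l ∈ subHomog A F (deg l)) →
    ε (A.op n fun l : Fin n => a l.castSucc) (a (Fin.last n)) =
      (-1 : k) ^ ((deg 0 - 1) * ∑ l : Fin n, (deg l.succ - 1)) *
        ε (A.op n fun l : Fin n => a l.succ) (a 0)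

/-- An A∞-functor `f : A → B` which is the identity on objects, given by its Taylor
coefficients `f n` of (shifted) degree zero, compatible with the grading and satisfying
the A∞-functor equations
`Σ f_{r+1+t}(1^{⊗r} ⊗ b_s ⊗ 1^{⊗t}) = Σ b_l(f_{i_1} ⊗ ⋯ ⊗ f_{i_l})`. -/
structure IsAInftyHom (A B : Struct k Obj H)
    (f : ∀ n : ℕ, MultilinearMap k (fun _ : Fin n => H) H) : Prop where
  f_zero : f 0 = 0
  f_grade : ∀ (n : ℕ) (hn : 1 ≤ n) (src tgt : Fin n → Obj) (deg : Fin n → ℤ)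
      (a : Fin n → H), (∀ l, a l ∈ A.grade (src l) (tgt l) (deg l)) →
      Composable n src tgt →
      f n a ∈ B.grade (src ⟨0, by omega⟩) (tgt ⟨n - 1, by omega⟩)
        ((∑ l, deg l) + 1 - (n : ℤ))
  f_noncomp : ∀ (n : ℕ), 1 ≤ n → ∀ (src tgt : Fin n → Obj) (deg : Fin n → ℤ)
      (a : Fin n → H), (∀ l, a l ∈ A.grade (src l) (tgt l) (deg l)) →
      ¬ Composable n src tgt → f n a = 0
  funct : ∀ (n : ℕ), 1 ≤ n → ∀ (deg : Fin n → ℤ) (a : Fin n → H),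
      (∀ l, a l ∈ homog A (deg l)) →
      ∑ p ∈ decomps n,
          koszulSign k deg p.1 • f (n + 1 - p.2) (insertArg A n p.1 p.2 a) =
        ∑ c : Composition n,
          B.op c.length fun i => f (c.blocksFun i) fun j => a (c.embedding i j)

/-- An A∞-isomorphism: an A∞-functor, the identity on objects, whose linear part is
bijective. -/
structure IsAInftyIso (A B : Struct k Obj H)
    (f : ∀ n : ℕ, MultilinearMap k (fun _ : Fin n => H) H)
    extends IsAInftyHom A B f : Prop where
  bij : Function.Bijective fun x : H => f 1 fun _ => x

/-- A cyclic A∞-isomorphism with respect to the pairing `ε`: the linear part preserves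
the pairing and the higher cyclicity conditions `Σ_{1 ≤ q ≤ n-1} ⟨f_q(-), f_{n-q}(-)⟩ = 0`
hold for `n ≥ 3`. -/
structure IsCyclicAInftyIso (A B : Struct k Obj H) (ε : H →ₗ[k] H →ₗ[k] k)
    (f : ∀ n : ℕ, MultilinearMap k (fun _ : Fin n => H) H)
    extends IsAInftyIso A B f : Prop where
  pair : ∀ x y : H, ε (f 1 fun _ => x) (f 1 fun _ => y) = ε x y
  higher_pair : ∀ (n : ℕ), 3 ≤ n → ∀ a : Fin n → H,
    ∑ q ∈ Finset.Ico 1 n,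
        ε (f q fun l : Fin q => if h : l.val < n then a ⟨l.val, h⟩ else 0)
          (f (n - q) fun l : Fin (n - q) =>
            if h : q + l.val < n then a ⟨q + l.val, h⟩ else 0) = 0


/-- Lemma `rigLem` of the paper.  Let `k` be a field of characteristic
zero and `A` a minimal A∞-category over `k` with finitely many objects and
finite-dimensional graded Hom-spaces.  Suppose `F 0, …, F (r-1)` are objects such that:
(1) `Hom^n(F i, F j) = 0` for `n < 0`, `Hom^0(F i, F i)` is one-dimensional, spanned by
the identity, and `Hom^0(F i, F j) = 0` for `i ≠ j`; (2) the full subcategory on the `F i`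
is strictly unital; (3) this subcategory carries a cyclic pairing of dimension two.
Then `{F 0, …, F (r-1)}` is a Σ-collection and the full subcategory is formal: all its
higher operations `m_n`, `n ≥ 3`, vanish identically. -/
theorem sigma_collection_and_formality
    (k : Type) [Field k] [CharZero k]
    (Obj H : Type) [Finite Obj] [AddCommGroup H] [Module k H] [FiniteDimensional k H]
    (A : Struct k Obj H) (hA : IsAInftyCat A)
    (hmin : A.op 1 = 0)
    (r : ℕ) (F : Fin r → Obj)
    -- (1): vanishing in negative degrees, and conditions on `Hom^0`
    (hneg : ∀ (i j : Fin r) (p : ℤ), p < 0 → A.grade (F i) (F j) p = ⊥)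
    (hdiag0 : ∀ i : Fin r, Module.finrank k (A.grade (F i) (F i) 0) = 1)
    (hoff0 : ∀ i j : Fin r, i ≠ j → A.grade (F i) (F j) 0 = ⊥)
    -- (2): the full subcategory on the `F i` is strictly unital
    (one : Fin r → H) (hone : IsStrictUnitOn A F one)
    -- (3): the full subcategory carries a cyclic pairing of dimension two
    (ε : H →ₗ[k] H →ₗ[k] k) (hε : IsCyclicPairingOn A F ε 2) :
    IsSigmaCollection A F ∧
      ∀ (n : ℕ), 3 ≤ n → ∀ a : Fin n → H, (∀ l, a l ∈ subHom A F) → A.op n a = 0 := by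
  classical
  -- The pairing bounds dimensions of graded pieces against their duals.
  have hfin : ∀ (i j : Fin r) (p : ℤ),
      Module.finrank k (A.grade (F i) (F j) p) ≤
        Module.finrank k (A.grade (F j) (F i) (2 - p)) := by
    intro i j p
    have hinj : Function.Injective
        (ε.compl₁₂ (A.grade (F i) (F j) p).subtype
          (A.grade (F j) (F i) (2 - p)).subtype) := by
      rw [injective_iff_map_eq_zero]
      intro x hx
      refine Subtype.ext (hε.nondeg i j p x.1 x.2 fun b hb => ?_)
      have := congrFun (congrArg DFunLike.coe hx) ⟨b, hb⟩
      simpa using this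
    calc Module.finrank k (A.grade (F i) (F j) p)
        ≤ Module.finrank k ((A.grade (F j) (F i) (2 - p)) →ₗ[k] k) :=
          LinearMap.finrank_le_finrank_of_injective hinj
      _ = _ := Subspace.dual_finrank_eq
  have hbot : ∀ (i j : Fin r) (p : ℤ), A.grade (F j) (F i) (2 - p) = ⊥ →
      A.grade (F i) (F j) p = ⊥ := by
    intro i j p hb
    rw [eq_bot_iff]
    intro a ha
    rw [Submodule.mem_bot]
    refine hε.nondeg i j p a ha fun b hb' => ?_
    rw [hb, Submodule.mem_bot] at hb'
    simp [hb']
  have hgt2 : ∀ (i j : Fin r) (p : ℤ), 2 < p → A.grade (F i) (F j) p = ⊥ := fun i j p hp =>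
    hbot i j p (hneg j i (2 - p) (by omega))
  have h2off : ∀ (i j : Fin r), i ≠ j → A.grade (F i) (F j) 2 = ⊥ := fun i j hij =>
    hbot i j 2 (by simpa using hoff0 j i (Ne.symm hij))
  have hspan : ∀ (i : Fin r) (a : H), a ∈ A.grade (F i) (F i) 0 →
      ∃ c : k, a = c • one i := by
    intro i a ha
    have hsub : Submodule.span k {one i} ≤ A.grade (F i) (F i) 0 :=
      Submodule.span_le.mpr (by simpa using hone.mem i)
    have heq : Submodule.span k {one i} = A.grade (F i) (F i) 0 :=
      Submodule.eq_of_le_of_finrank_le hsub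
        (by rw [hdiag0 i, finrank_span_singleton (hone.ne_zero i)])
    rw [← heq] at ha
    obtain ⟨c, hc⟩ := Submodule.mem_span_singleton.mp ha
    exact ⟨c, hc.symm⟩
  have hsubHom : ∀ (i j : Fin r) (p : ℤ), A.grade (F i) (F j) p ≤ subHom A F := fun i j p =>
    le_iSup_of_le i (le_iSup_of_le j (le_iSup (fun p => A.grade (F i) (F j) p) p))
  have hsubHomog : ∀ (i j : Fin r) (p : ℤ), A.grade (F i) (F j) p ≤ subHomog A F p :=
    fun i j p => le_iSup_of_le i (le_iSup (fun j => A.grade (F i) (F j) p) j)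
  -- The key vanishing statement for homogeneous arguments.
  have hkey : ∀ (n : ℕ), 3 ≤ n → ∀ (io jo : Fin n → Fin r) (p : Fin n → ℤ) (a : Fin n → H),
      (∀ l, a l ∈ A.grade (F (io l)) (F (jo l)) (p l)) → A.op n a = 0 := by
    intro n hn io jo p a ha
    by_cases hcomp : Composable n (fun l => F (io l)) (fun l => F (jo l))
    swap
    · exact hA.op_noncomp n (by omega) _ _ p a ha hcomp
    by_cases hz : ∃ l, a l = 0
    · obtain ⟨l, hl⟩ := hz
      exact (A.op n).map_coord_zero l hl
    push_neg at hz
    by_cases h0 : ∃ l, p l = 0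
    · obtain ⟨l, hl0⟩ := h0
      by_cases hij : io l = jo l
      · have hal : a l ∈ A.grade (F (io l)) (F (io l)) 0 := by
          have h := ha l
          rwa [hl0, ← hij] at h
        obtain ⟨c, hc⟩ := hspan (io l) (a l) hal
        have hupd : a = Function.update a l (c • one (io l)) := by
          rw [← hc, Function.update_eq_self]
        rw [hupd, (A.op n).map_update_smul]
        rw [hone.higher n hn _ ?mem l (io l) (Function.update_self l _ a)]
        · simp
        case mem =>
          intro m
          by_cases hm : m = l
          · subst hm
            rw [Function.update_self]
            exact hsubHom (io m) (io m) 0 (hone.mem (io m))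
          · rw [Function.update_of_ne hm]
            exact hsubHom _ _ _ (ha m)
      · have h := ha l
        rw [hl0, hoff0 (io l) (jo l) hij, Submodule.mem_bot] at h
        exact absurd h (hz l)
    push_neg at h0
    have h1 : ∀ l, 1 ≤ p l := by
      intro l
      by_contra hlt
      push_neg at hlt
      have hplt : p l < 0 := by have := h0 l; omega
      have h := ha l
      rw [hneg (io l) (jo l) (p l) hplt, Submodule.mem_bot] at h
      exact hz l h
    have hm := hA.op_grade n (by omega) _ _ p a ha hcomp
    by_cases hsum : 2 < (∑ l, p l) + 2 - (n : ℤ)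
    · rw [hgt2 _ _ _ hsum, Submodule.mem_bot] at hm
      exact hm
    push_neg at hsum
    have hall1 : ∀ l, p l = 1 := by
      intro l
      by_contra hne
      have hlt : (∑ _l : Fin n, (1 : ℤ)) < ∑ l, p l :=
        Finset.sum_lt_sum (fun m _ => h1 m) ⟨l, Finset.mem_univ l, by have := h1 l; omega⟩
      simp at hlt
      omega
    have hsum_eq : (∑ l, p l) = (n : ℤ) := by simp [hall1]
    rw [hsum_eq, show ((n : ℤ) + 2 - n) = 2 by ring] at hm
    refine hε.nondeg _ _ 2 _ hm fun b hb => ?_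
    rw [show ((2 : ℤ) - 2) = 0 by ring] at hb
    by_cases hst : jo ⟨n - 1, by omega⟩ = io ⟨0, by omega⟩
    swap
    · rw [hoff0 _ _ hst, Submodule.mem_bot] at hb
      simp [hb]
    · rw [← hst] at hb
      set t : Fin r := jo ⟨n - 1, by omega⟩ with ht
      obtain ⟨c, hc⟩ := hspan t b hb
      have hmain : ε (A.op n a) (one t) = 0 := by
        set deg : Fin (n + 1) → ℤ := Fin.snoc (fun _ => 1) 0 with hdeg
        set ah : Fin (n + 1) → H := Fin.snoc a (one t) with hah
        have hmem : ∀ l, ah l ∈ subHomog A F (deg l) := by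
          intro l
          refine Fin.lastCases ?_ ?_ l
          · rw [hah, hdeg]
            simp only [Fin.snoc_last]
            exact hsubHomog t t 0 (hone.mem t)
          · intro m
            rw [hah, hdeg]
            simp only [Fin.snoc_castSucc]
            exact hsubHomog _ _ _ (by rw [← hall1 m]; exact ha m)
        have hcyc := hε.cyclic n (by omega) deg ah hmem
        have e1 : (fun l : Fin n => ah l.castSucc) = a := by
          funext l
          simp [hah]
        have e2 : ah (Fin.last n) = one t := by
          simp [hah]
        have e3 : A.op n (fun l : Fin n => ah l.succ) = 0 := by
          refine hone.higher n hn _ ?_ ⟨n - 1, by omega⟩ t ?_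
          · intro l
            refine Fin.lastCases ?_ ?_ l.succ
            · rw [hah]
              simp only [Fin.snoc_last]
              exact hsubHom t t 0 (hone.mem t)
            · intro m
              rw [hah]
              simp only [Fin.snoc_castSucc]
              exact hsubHom _ _ _ (ha m)
          · have : (⟨n - 1, by omega⟩ : Fin n).succ = Fin.last n := by
              ext
              simp [Fin.last]
              omega
            rw [this, hah]
            simp
        rw [e1, e2, e3] at hcyc
        simpa using hcyc
      rw [hc, map_smul, smul_eq_mul, hmain, mul_zero]
  have hsub_eq : subHom A F = ⨆ σ : Fin r × Fin r × ℤ, A.grade (F σ.1) (F σ.2.1) σ.2.2 := by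
    apply le_antisymm
    · exact iSup_le fun i => iSup_le fun j => iSup_le fun p => le_iSup_of_le (i, j, p) le_rfl
    · exact iSup_le fun σ => hsubHom σ.1 σ.2.1 σ.2.2
  constructor
  · constructor
    · intro i
      refine ⟨hdiag0 i, ?_, ?_, ?_⟩
      · -- even-dimensionality of `Hom^1` from the skew pairing
        set V := A.grade (F i) (F i) 1 with hV
        set B := ε.compl₁₂ V.subtype V.subtype with hB
        have hskew : ∀ x y : V, B x y = - B y x := by
          intro x y
          have h := hε.symm 1 1 x.1 y.1 (hsubHomog i i 1 x.2) (hsubHomog i i 1 y.2)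
          rw [show ((1 : ℤ) * 1) = 1 by ring, zpow_one] at h
          simpa [hB, LinearMap.compl₁₂_apply, neg_one_mul] using h
        have hndB : LinearMap.BilinForm.Nondegenerate B := by
          refine LinearMap.BilinForm.Nondegenerate.ofSeparatingLeft ?_
          intro x hx
          refine Subtype.ext (hε.nondeg i i 1 x.1 x.2 fun b hb => ?_)
          rw [show ((2 : ℤ) - 1) = 1 by ring] at hb
          have := hx ⟨b, hb⟩
          simpa [hB, LinearMap.compl₁₂_apply] using this
        rcases Nat.even_or_odd (Module.finrank k V) with ⟨g, hg⟩ | ho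
        · exact ⟨g, by omega⟩
        · exfalso
          set b := Module.finBasis k V
          have hdet := (LinearMap.BilinForm.nondegenerate_iff_det_ne_zero b).mp hndB
          set M := LinearMap.BilinForm.toMatrix b B with hM
          have hT : M.transpose = -M := by
            ext x y
            simp [hM, Matrix.transpose_apply, LinearMap.BilinForm.toMatrix_apply,
              hskew (b y) (b x)]
          have hMdet : M.det = - M.det := by
            conv_lhs => rw [← Matrix.det_transpose, hT, Matrix.det_neg]
            simp [Odd.neg_one_pow (by simpa using ho)]
          have h0 : (2 : k) * M.det = 0 := by linear_combination hMdet
          exact hdet ((mul_eq_zero.mp h0).resolve_left two_ne_zero)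
      · have h1 := hfin i i 2
        have h2 := hfin i i 0
        rw [show ((2 : ℤ) - 2) = 0 by ring] at h1
        rw [show ((2 : ℤ) - 0) = 2 by ring] at h2
        have := hdiag0 i
        omega
      · intro p hp0 hp1 hp2
        rcases lt_or_ge p 0 with h | h
        · exact hneg i i p h
        · exact hgt2 i i p (by omega)
    · exact hoff0
  · intro n hn a ha
    have hmem : ∀ l, a l ∈ ⨆ σ : Fin r × Fin r × ℤ, A.grade (F σ.1) (F σ.2.1) σ.2.2 := by
      intro l
      rw [← hsub_eq]
      exact ha l
    have := fun l => (Submodule.mem_iSup_iff_exists_finsupp _ _).mp (hmem l)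
    choose f hf hfs using this
    have ha' : a = fun l => ∑ σ ∈ (f l).support, f l σ := by
      funext l
      rw [← hfs l, Finsupp.sum]
    rw [ha', (A.op n).map_sum_finset]
    refine Finset.sum_eq_zero fun ρ _ => ?_
    exact hkey n hn (fun l => (ρ l).1) (fun l => (ρ l).2.1) (fun l => (ρ l).2.2) _
      (fun l => hf l (ρ l))

end AInfty
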